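/- arXiv:1710.01071 — 2 statements merged into one kernel-verified Lean document; each statement's English description precedes it below -/
import Mathlib

section
/- Let m = 2^a·b be even with b odd, a ≥ 1. The number of matrices [[x,y],[0,z]] with xz = 2m, 0 ≤ y < z, gcd(x,y,z) = 1, and both x and z even, equals 2^a·ψ(b) − ψ(b). -/
/-- The Dedekind psi function `ψ(n) = n · ∏_{p | n, p prime} (1 + 1/p)`. -/
def dedekindPsi (n : ℕ) : ℕ :=
  (n / n.primeFactors.prod id) * n.primeFactors.prod (fun p => p + 1)

/-!
For `x z` with `x * z = n`, the admissible `y < z` are those coprime to `d = gcd x z`, and there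
are `(z / d) * φ d` of them. Summed over all factorizations `x * z = n` this count is
multiplicative in `n`; at `p ^ k` the factorization `(p ^ (k - i), p ^ i)` contributes `1` for
`i = 0`, `p ^ k` for `i = k` and `p ^ (i - 1) * (p - 1)` in between, so the total is `ψ(p ^ k)`.
For `n = 2 ^ (a + 1) * b` with `b` odd, asking `x` and `z` to be even keeps exactly the interior
factorizations of the `2`-part, which contribute `2 ^ a - 1`, times `ψ(b)` from the odd part.
-/

open Finset Nat

theorem card_filter_coprime_range_mul (d q : ℕ) :
    #{y ∈ range (d * q) | d.Coprime y} = q * φ d := by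
  induction q with
  | zero => simp
  | succ q ih =>
    rw [mul_add_one, range_eq_Ico, ← Ico_union_Ico_eq_Ico (Nat.zero_le _) (Nat.le_add_right _ d),
      filter_union, card_union_of_disjoint
        (disjoint_filter_filter (Ico_disjoint_Ico_consecutive _ _ _)),
      ← range_eq_Ico, ih, filter_coprime_Ico_eq_totient, add_one_mul]

def hnfCount (x z : ℕ) : ℕ := z / x.gcd z * φ (x.gcd z)

theorem card_filter_range_gcd_eq_one (x z : ℕ) :
    #{y ∈ range z | (x.gcd y).gcd z = 1} = hnfCount x z := by
  have h := card_filter_coprime_range_mul (x.gcd z) (z / x.gcd z)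
  rw [Nat.mul_div_cancel' (Nat.gcd_dvd_right x z)] at h
  simp_rw [gcd_right_comm x _ z]
  exact h

theorem hnfCount_mul {x₁ z₁ x₂ z₂ : ℕ} (h : (x₁ * z₁).Coprime (x₂ * z₂)) :
    hnfCount (x₁ * x₂) (z₁ * z₂) = hnfCount x₁ z₁ * hnfCount x₂ z₂ := by
  have cop {a b : ℕ} (ha : a ∣ x₁ * z₁) (hb : b ∣ x₂ * z₂) : a.Coprime b :=
    (h.coprime_dvd_left ha).coprime_dvd_right hb
  have hz : z₁.Coprime z₂ := cop (dvd_mul_left _ _) (dvd_mul_left _ _)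
  have hgcd : (x₁ * x₂).gcd (z₁ * z₂) = x₁.gcd z₁ * x₂.gcd z₂ := by
    rw [Coprime.gcd_mul _ hz,
      Coprime.gcd_mul_right_cancel x₁ (cop (dvd_mul_left _ _) (dvd_mul_right _ _)).symm,
      Coprime.gcd_mul_left_cancel x₂ (cop (dvd_mul_right _ _) (dvd_mul_left _ _))]
  have hd : (x₁.gcd z₁).Coprime (x₂.gcd z₂) :=
    (hz.coprime_dvd_left (Nat.gcd_dvd_right _ _)).coprime_dvd_right (Nat.gcd_dvd_right _ _)
  rw [hnfCount, hgcd, totient_mul hd,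
    ← Nat.div_mul_div_comm (Nat.gcd_dvd_right _ _) (Nat.gcd_dvd_right _ _), hnfCount, hnfCount]
  ring

@[simp] theorem hnfCount_one_left (z : ℕ) : hnfCount 1 z = z := by simp [hnfCount]

@[simp] theorem hnfCount_one_right (x : ℕ) : hnfCount x 1 = 1 := by simp [hnfCount]

theorem hnfCount_prime_pow {p i j : ℕ} (hp : p.Prime) (hi : i ≠ 0) (hj : j ≠ 0) :
    hnfCount (p ^ i) (p ^ j) = p ^ (j - 1) * (p - 1) := by
  rcases le_total i j with hij | hji
  · rw [hnfCount, Nat.gcd_eq_left (pow_dvd_pow p hij), Nat.pow_div hij hp.pos,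
      totient_prime_pow hp (by omega), ← mul_assoc, ← pow_add]
    congr 2
    omega
  · rw [hnfCount, Nat.gcd_eq_right (pow_dvd_pow p hji), Nat.div_self (pow_pos hp.pos _), one_mul,
      totient_prime_pow hp (by omega)]

theorem sum_divisorsAntidiagonal_prime_pow {M : Type*} [AddCommMonoid M] {p : ℕ} (hp : p.Prime)
    (k : ℕ) (f : ℕ → ℕ → M) :
    ∑ q ∈ (p ^ k).divisorsAntidiagonal, f q.1 q.2 =
      ∑ i ∈ range (k + 1), f (p ^ (k - i)) (p ^ i) := by
  rw [sum_divisorsAntidiagonal', sum_divisors_prime_pow hp]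
  refine sum_congr rfl fun i hi => ?_
  rw [Nat.pow_div (Nat.lt_succ_iff.mp (mem_range.mp hi)) hp.pos]

theorem sum_range_hnfCount_prime_pow {p : ℕ} (hp : p.Prime) (k : ℕ) :
    ∑ i ∈ range k, hnfCount (p ^ (k - i)) (p ^ (i + 1)) = p ^ k - 1 := by
  have hgeom := geom_sum_mul_add (p - 1) k
  rw [Nat.sub_add_cancel hp.one_le, sum_mul] at hgeom
  rw [← hgeom, Nat.add_sub_cancel]
  refine sum_congr rfl fun i hi => ?_
  rw [hnfCount_prime_pow hp (Nat.sub_ne_zero_of_lt (mem_range.mp hi)) (Nat.add_one_ne_zero i),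
    Nat.add_sub_cancel]

theorem sum_divisorsAntidiagonal_mul_of_coprime {R : Type*} [CommSemiring R] {m n : ℕ}
    (hmn : m.Coprime n) {g g₁ g₂ : ℕ → ℕ → R}
    (h : ∀ x₁ z₁ x₂ z₂, x₁ * z₁ = m → x₂ * z₂ = n → g (x₁ * x₂) (z₁ * z₂) = g₁ x₁ z₁ * g₂ x₂ z₂) :
    ∑ q ∈ (m * n).divisorsAntidiagonal, g q.1 q.2 =
      (∑ q ∈ m.divisorsAntidiagonal, g₁ q.1 q.2) * ∑ q ∈ n.divisorsAntidiagonal, g₂ q.1 q.2 := by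
  simp_rw [sum_divisorsAntidiagonal', sum_mul_sum]
  rw [Nat.divisors_mul, Finset.mul_def, sum_image hmn.mul_injOn_divisors, sum_product]
  refine sum_congr rfl fun d hd => sum_congr rfl fun e he => ?_
  rw [mem_divisors] at hd he
  rw [← Nat.div_mul_div_comm hd.1 he.1]
  exact h _ _ _ _ (Nat.div_mul_cancel hd.1) (Nat.div_mul_cancel he.1)

def hnfTotal (n : ℕ) : ℕ := ∑ q ∈ n.divisorsAntidiagonal, hnfCount q.1 q.2

def evenHnfTotal (n : ℕ) : ℕ :=
  ∑ q ∈ n.divisorsAntidiagonal with Even q.1 ∧ Even q.2, hnfCount q.1 q.2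

theorem hnfTotal_mul {m n : ℕ} (hmn : m.Coprime n) : hnfTotal (m * n) = hnfTotal m * hnfTotal n :=
  sum_divisorsAntidiagonal_mul_of_coprime hmn fun _ _ _ _ h₁ h₂ => hnfCount_mul (h₁ ▸ h₂ ▸ hmn)

theorem hnfTotal_prime_pow {p : ℕ} (hp : p.Prime) (k : ℕ) :
    hnfTotal (p ^ (k + 1)) = p ^ (k + 1) + p ^ k := by
  rw [hnfTotal, sum_divisorsAntidiagonal_prime_pow hp, sum_range_succ, sum_range_succ']
  simp only [Nat.add_sub_add_right, sum_range_hnfCount_prime_pow hp, Nat.sub_self, Nat.sub_zero,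
    pow_zero, hnfCount_one_left, hnfCount_one_right]
  have := Nat.one_le_pow k p hp.pos
  omega

theorem dedekindPsi_prime_pow {p : ℕ} (hp : p.Prime) (k : ℕ) :
    dedekindPsi (p ^ (k + 1)) = p ^ (k + 1) + p ^ k := by
  rw [dedekindPsi, Nat.primeFactors_prime_pow k.succ_ne_zero hp, prod_singleton, prod_singleton,
    id, pow_succ, Nat.mul_div_cancel _ hp.pos]
  ring

theorem dedekindPsi_mul {m n : ℕ} (hm : m ≠ 0) (hn : n ≠ 0) (hmn : m.Coprime n) :
    dedekindPsi (m * n) = dedekindPsi m * dedekindPsi n := by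
  simp only [dedekindPsi, id_eq]
  rw [Nat.primeFactors_mul hm hn,
    prod_union hmn.disjoint_primeFactors, prod_union hmn.disjoint_primeFactors,
    ← Nat.div_mul_div_comm (Nat.prod_primeFactors_dvd m) (Nat.prod_primeFactors_dvd n)]
  ring

theorem hnfTotal_eq_dedekindPsi (n : ℕ) : hnfTotal n = dedekindPsi n := by
  induction n using Nat.recOnPosPrimePosCoprime with
  | prime_pow p k hp hk =>
    obtain ⟨k, rfl⟩ := Nat.exists_eq_add_one_of_ne_zero hk.ne'
    rw [hnfTotal_prime_pow hp, dedekindPsi_prime_pow hp]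
  | zero => simp [hnfTotal, dedekindPsi]
  | one => simp [hnfTotal, dedekindPsi]
  | coprime m n hm hn hmn ihm ihn =>
    rw [hnfTotal_mul hmn, ihm, ihn, dedekindPsi_mul (by omega) (by omega) hmn]

theorem evenHnfTotal_two_pow (k : ℕ) : evenHnfTotal (2 ^ (k + 1)) = 2 ^ k - 1 := by
  rw [evenHnfTotal, sum_filter,
    sum_divisorsAntidiagonal_prime_pow prime_two _
      fun x z => if Even x ∧ Even z then hnfCount x z else 0,
    sum_range_succ, sum_range_succ', ← sum_range_hnfCount_prime_pow prime_two]
  simp only [Nat.add_sub_add_right, Nat.sub_self, pow_zero, Nat.not_even_one, and_false, false_and,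
    if_false, add_zero]
  refine sum_congr rfl fun i hi => if_pos ⟨?_, ?_⟩
  · exact (Nat.even_pow' (Nat.sub_ne_zero_of_lt (mem_range.mp hi))).mpr even_two
  · exact (Nat.even_pow' i.succ_ne_zero).mpr even_two

theorem evenHnfTotal_two_pow_mul (k : ℕ) {b : ℕ} (hb : Odd b) :
    evenHnfTotal (2 ^ k * b) = evenHnfTotal (2 ^ k) * hnfTotal b := by
  simp only [evenHnfTotal, hnfTotal, sum_filter]
  have hcop : (2 ^ k).Coprime b := (Nat.coprime_two_left.mpr hb).pow_left _
  refine sum_divisorsAntidiagonal_mul_of_coprime hcop (g₂ := hnfCount)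
    (g := fun x z => if Even x ∧ Even z then hnfCount x z else 0)
    (g₁ := fun x z => if Even x ∧ Even z then hnfCount x z else 0) fun x₁ z₁ x₂ z₂ h₁ h₂ => ?_
  obtain ⟨hx₂, hz₂⟩ := Nat.odd_mul.mp (h₂ ▸ hb)
  simp only [Nat.even_mul, Nat.not_even_iff_odd.mpr hx₂, Nat.not_even_iff_odd.mpr hz₂, or_false]
  split_ifs
  · exact hnfCount_mul (h₁ ▸ h₂ ▸ hcop)
  · exact (zero_mul _).symm

def evenHnfTriples (n : ℕ) : Finset (Σ _ : ℕ × ℕ, ℕ) :=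
  {q ∈ n.divisorsAntidiagonal | Even q.1 ∧ Even q.2}.sigma
    fun q => {y ∈ range q.2 | (q.1.gcd y).gcd q.2 = 1}

theorem card_evenHnfTriples (n : ℕ) : #(evenHnfTriples n) = evenHnfTotal n :=
  (card_sigma _ _).trans (sum_congr rfl fun q _ => card_filter_range_gcd_eq_one q.1 q.2)

def hnfMatrix (t : Σ _ : ℕ × ℕ, ℕ) : Matrix (Fin 2) (Fin 2) ℤ := !![(t.1.1 : ℤ), t.2; 0, t.1.2]

theorem hnfMatrix_injective : Function.Injective hnfMatrix := by
  rintro ⟨⟨x, z⟩, y⟩ ⟨⟨x', z'⟩, y'⟩ h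
  have h00 := congrFun₂ h 0 0
  have h01 := congrFun₂ h 0 1
  have h11 := congrFun₂ h 1 1
  simp only [hnfMatrix, Matrix.of_apply, Matrix.cons_val', Matrix.cons_val_zero,
    Matrix.cons_val_one, Matrix.empty_val', Matrix.cons_val_fin_one, Nat.cast_inj] at h00 h01 h11
  subst h00 h01 h11
  rfl

theorem mem_image_hnfMatrix_evenHnfTriples {n : ℕ} (hn : n ≠ 0) (M : Matrix (Fin 2) (Fin 2) ℤ) :
    M ∈ hnfMatrix '' evenHnfTriples n ↔
      M 1 0 = 0 ∧ M 0 0 * M 1 1 = n ∧ 0 ≤ M 0 1 ∧ M 0 1 < M 1 1 ∧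
        Int.gcd (Int.gcd (M 0 0) (M 0 1)) (M 1 1) = 1 ∧ Even (M 0 0) ∧ Even (M 1 1) := by
  constructor
  · rintro ⟨⟨⟨x, z⟩, y⟩, ht, rfl⟩
    simp only [evenHnfTriples, coe_sigma, coe_filter, mem_divisorsAntidiagonal, mem_range,
      Set.mem_sigma_iff, Set.mem_ofPred_eq, hnfMatrix, Matrix.of_apply, Matrix.cons_val',
      Matrix.cons_val_zero, Matrix.cons_val_fin_one, Matrix.cons_val_one, cast_nonneg, cast_lt,
      Int.gcd_natCast_natCast, Int.even_coe_nat, true_and] at ht ⊢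
    obtain ⟨⟨⟨hprod, -⟩, hx, hz⟩, hlt, hgcd⟩ := ht
    exact ⟨by exact_mod_cast hprod, hlt, hgcd, hx, hz⟩
  · rintro ⟨h10, hprod, h01, hlt, hgcd, hx, hz⟩
    have hz0 : 0 < M 1 1 := h01.trans_lt hlt
    have hx0 : 0 < M 0 0 := pos_of_mul_pos_left (hprod ▸ (by positivity)) hz0.le
    obtain ⟨x, hx'⟩ := Int.eq_ofNat_of_zero_le hx0.le
    obtain ⟨y, hy'⟩ := Int.eq_ofNat_of_zero_le h01
    obtain ⟨z, hz'⟩ := Int.eq_ofNat_of_zero_le hz0.le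
    refine ⟨⟨(x, z), y⟩, ?_, ?_⟩
    · simp only [hx', hy', hz', Int.gcd_natCast_natCast, Int.even_coe_nat, cast_lt]
        at hprod hlt hgcd hx hz
      norm_cast at hprod
      simp only [evenHnfTriples, coe_sigma, coe_filter, mem_divisorsAntidiagonal, mem_range,
        Set.mem_sigma_iff, Set.mem_ofPred_eq]
      exact ⟨⟨⟨hprod, hn⟩, hx, hz⟩, hlt, hgcd⟩
    · rw [Matrix.eta_fin_two M]
      simp [hnfMatrix, hx', hy', hz', h10]

theorem card_evenHnfMatrices {n : ℕ} (hn : n ≠ 0) :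
    Nat.card {M : Matrix (Fin 2) (Fin 2) ℤ //
        M 1 0 = 0 ∧ M 0 0 * M 1 1 = n ∧ 0 ≤ M 0 1 ∧ M 0 1 < M 1 1 ∧
        Int.gcd (Int.gcd (M 0 0) (M 0 1)) (M 1 1) = 1 ∧ Even (M 0 0) ∧ Even (M 1 1)} =
      evenHnfTotal n := by
  rw [← card_evenHnfTriples, ← Nat.card_eq_finsetCard]
  calc _ = Nat.card (hnfMatrix '' evenHnfTriples n) :=
        Nat.card_congr (.subtypeEquivRight fun M => (mem_image_hnfMatrix_evenHnfTriples hn M).symm)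
    _ = _ := Nat.card_image_of_injective hnfMatrix_injective _

/-- For `m = 2^a·b` even with `b` odd and `a ≥ 1`, the number of matrices
`[[x,y],[0,z]]` with `xz = 2m`, `0 ≤ y < z`, `gcd(x,y,z) = 1`, and `x`, `z` both
even, equals `2^a·ψ(b) − ψ(b)`. -/
theorem count_S2_eq (m a b : ℕ) (ha : 1 ≤ a) (hb : Odd b) (hm : m = 2 ^ a * b) :
    (Nat.card {M : Matrix (Fin 2) (Fin 2) ℤ //
        M 1 0 = 0 ∧ M 0 0 * M 1 1 = (2 * m : ℤ) ∧ 0 ≤ M 0 1 ∧ M 0 1 < M 1 1 ∧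
        Int.gcd (Int.gcd (M 0 0) (M 0 1)) (M 1 1) = 1 ∧ Even (M 0 0) ∧ Even (M 1 1)} : ℤ)
      = 2 ^ a * dedekindPsi b - dedekindPsi b := by
  obtain ⟨k, rfl⟩ := Nat.exists_eq_add_one_of_ne_zero (by omega : a ≠ 0)
  have h2m : 2 * m = 2 ^ (k + 1 + 1) * b := by rw [hm]; ring
  have hcard := card_evenHnfMatrices (n := 2 * m)
    (by rw [h2m]; exact mul_ne_zero (by positivity) hb.pos.ne')
  push_cast at hcard
  rw [hcard, h2m, evenHnfTotal_two_pow_mul _ hb, evenHnfTotal_two_pow, hnfTotal_eq_dedekindPsi,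
    Nat.cast_mul, Nat.cast_sub Nat.one_le_two_pow]
  push_cast
  ring
end

section
/- Suppose f(q) = q^{-1} + Σ_{k≥1} a_k q^k is completely (2+)-replicable with replicates f^{[2]}, f^{[√2]} having coefficients a_k^{[2]}, a_k^{[√2]}. Then for every k ≥ 1: a_{4k} = a_{2k+1} + Σ_{j=1}^{k-1} a_j·a_{2k-j} + (1/2)·(a_k² − a_k^{[2]}) − a_{2k}^{[√2]}. -/
/-! The identity is the `q^{2k}`-coefficient of the replication identity of index `2` for `f`
itself. Its left side is `2 a_{4k} + a_k^{[2]} + 2 a_{2k}^{[√2]}`. The second Faber polynomial is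
`X² − 2a₁`, and for `f = q⁻¹ + h` the `q^{2k}`-coefficient of `f²` is
`2 a_{2k+1} + Σ_{j=1}^{2k-1} a_j a_{2k-j} = 2 a_{2k+1} + a_k² + 2 Σ_{j=1}^{k-1} a_j a_{2k-j}`,
the convolution being symmetric under `j ↦ 2k - j`. -/

noncomputable section

/-- Formal `q`-series with rational coefficients (Laurent series in `q`). -/
abbrev Ser := LaurentSeries ℚ

/-- `f = q⁻¹ + Σ_{k≥1} a_k q^k`: the coefficient of `q⁻¹` is `1` and all other
coefficients in non-positive degrees vanish. -/
def IsNormalized (f : Ser) : Prop :=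
  f.coeff (-1) = 1 ∧ ∀ k : ℤ, k ≤ 0 → k ≠ -1 → f.coeff k = 0

/-- `P` is the `n`-th Faber polynomial of `f`: the unique monic polynomial of degree
`n` such that `P(f(q)) − q^{-n}` has only positive powers of `q`. -/
def IsFaber (f : Ser) (n : ℕ) (P : Polynomial ℚ) : Prop :=
  P.Monic ∧ P.natDegree = n ∧
  (Polynomial.aeval f P).coeff (-(n : ℤ)) = 1 ∧
  ∀ k : ℤ, k ≤ 0 → k ≠ -(n : ℤ) → (Polynomial.aeval f P).coeff k = 0

/-- The coefficient of `q^k` in the left-hand side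
`Σ_{ad=n, 0≤b<d} f^{[a]}((aτ+b)/d) + Σ_{ad=n, d even, 0≤b<d} f^{[a√2]}((2aτ+b)/d)`
of the `(2+)`-replication identity, where `F a` is the series `f^{[a]}` and `G a`
is the series `f^{[a√2]}`. -/
def RepLHS (F G : ℕ → Ser) (n : ℕ) (k : ℤ) : ℚ :=
  (∑ x ∈ n.divisorsAntidiagonal,
    if (x.1 : ℤ) ∣ k then (x.2 : ℚ) * (F x.1).coeff ((x.2 : ℤ) * k / (x.1 : ℤ)) else 0)
  + (∑ x ∈ n.divisorsAntidiagonal,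
    if Even x.2 ∧ (2 * (x.1 : ℤ)) ∣ k then
      (x.2 : ℚ) * (G x.1).coeff ((x.2 : ℤ) * k / (2 * (x.1 : ℤ))) else 0)

/-- The `(2+)`-replication identity of index `n` for `f` with replicates
`F a = f^[a]`, `G a = f^[a√2]`, expressed on `q`-expansion coefficients:
`Σ_{ad=n, 0≤b<d} f^{[a]}((aτ+b)/d) + Σ_{ad=n, d even, 0≤b<d} f^{[a√2]}((2aτ+b)/d)
  = P_{n,f}(f(τ))`. -/
def RepEq (F G : ℕ → Ser) (f : Ser) (n : ℕ) : Prop :=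
  ∀ P : Polynomial ℚ, IsFaber f n P →
    ∀ k : ℤ, RepLHS F G n k = (Polynomial.aeval f P).coeff k

/-- Multiplication on the index set `ℕ ∪ √2·ℕ`, encoding `(n, b)` as `n·(√2)^b`:
`(√2·n)·(√2·m) = 2nm`. -/
def indexMul (r s : ℕ × Bool) : ℕ × Bool :=
  (r.1 * s.1 * (if r.2 ∧ s.2 then 2 else 1), xor r.2 s.2)

/-- `Φ` is a completely `(2+)`-replicable system: `Φ r` is the replicate `f^{[r]}` for
`r ∈ ℕ ∪ √2·ℕ`, and every `Φ r` is `(2+)`-replicable with `(Φ r)^{[m]} = Φ (r·m)`. -/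
def IsCR2System (Φ : ℕ × Bool → Ser) : Prop :=
  ∀ r : ℕ × Bool, 1 ≤ r.1 → ∀ n : ℕ, 1 ≤ n →
    RepEq (fun a => Φ (indexMul r (a, false))) (fun a => Φ (indexMul r (a, true))) (Φ r) n

/-- `f` is completely `(2+)`-replicable. -/
def Completely2PlusReplicable (f : Ser) : Prop :=
  ∃ Φ : ℕ × Bool → Ser, Φ (1, false) = f ∧ IsCR2System Φ

open Finset

theorem LaurentSeries.coeff_mul_eq_sum_Icc {R : Type*} [Semiring R] {x y : LaurentSeries R}
    {a b : ℤ} (hx : ∀ j < a, x.coeff j = 0) (hy : ∀ j < b, y.coeff j = 0) (m : ℤ) :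
    (x * y).coeff m = ∑ j ∈ Icc a (m - b), x.coeff j * y.coeff (m - j) := by
  rw [HahnSeries.coeff_mul]
  refine sum_bij_ne_zero (fun ij _ _ => ij.1) ?_ ?_ ?_ ?_
  · rintro ⟨i, j⟩ hij -
    obtain ⟨hi, hj, rfl⟩ := mem_antidiagonal.1 hij
    have := not_lt.1 (mt (hx i) hi)
    have := not_lt.1 (mt (hy j) hj)
    simp only [mem_Icc]
    omega
  · rintro ⟨i, j⟩ hij - ⟨i', j'⟩ hij' - rfl
    obtain ⟨-, -, h⟩ := mem_antidiagonal.1 hij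
    obtain ⟨-, -, h'⟩ := mem_antidiagonal.1 hij'
    simp only [Prod.mk.injEq, true_and]
    omega
  · intro j _ hj
    refine ⟨(j, m - j), mem_antidiagonal.2 ⟨left_ne_zero_of_mul hj, right_ne_zero_of_mul hj,
      add_sub_cancel j m⟩, hj, rfl⟩
  · rintro ⟨i, j⟩ hij -
    obtain ⟨-, -, rfl⟩ := mem_antidiagonal.1 hij
    simp

theorem Finset.sum_Icc_two_mul_sub_one_of_symm {M : Type*} [AddCommMonoid M] (g : ℤ → M)
    {K : ℤ} (hK : 1 ≤ K) (hg : ∀ j, g (2 * K - j) = g j) :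
    ∑ j ∈ Icc 1 (2 * K - 1), g j = g K + 2 • ∑ j ∈ Icc 1 (K - 1), g j := by
  have hsplit : Icc 1 (2 * K - 1) = insert K (Icc 1 (K - 1) ∪ Icc (K + 1) (2 * K - 1)) := by
    ext; simp only [mem_Icc, mem_insert, mem_union]; omega
  have hreflect : ∑ j ∈ Icc (K + 1) (2 * K - 1), g j = ∑ j ∈ Icc 1 (K - 1), g j :=
    sum_nbij' (2 * K - ·) (2 * K - ·) (by intro; simp only [mem_Icc]; omega)
      (by intro; simp only [mem_Icc]; omega) (by intro; simp) (by intro; simp)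
      (fun j _ => (hg j).symm)
  rw [hsplit, sum_insert (by simp), sum_union (disjoint_left.2 (by simp only [mem_Icc]; omega)),
    hreflect, two_nsmul]

theorem Finset.sum_Icc_natCast {M : Type*} [AddCommMonoid M] (g : ℤ → M) (a b : ℕ) :
    ∑ j ∈ Icc a b, g j = ∑ j ∈ Icc (a : ℤ) b, g j := by
  have himage : (Icc a b).image (Nat.cast : ℕ → ℤ) = Icc (a : ℤ) b := by
    apply coe_injective
    push_cast
    exact Nat.image_cast_int_Icc a b
  rw [← himage, sum_image fun _ _ _ _ => Nat.cast_inj.1]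

theorem coeff_aeval_X_sq_sub_C (f : Ser) (c : ℚ) (m : ℤ) :
    (Polynomial.aeval f (Polynomial.X ^ 2 - Polynomial.C c)).coeff m
      = (f ^ 2).coeff m - if m = 0 then c else 0 := by
  simp only [map_sub, map_pow, Polynomial.aeval_X, Polynomial.aeval_C, HahnSeries.coeff_sub,
    HahnSeries.algebraMap_apply', PowerSeries.algebraMap_apply, Algebra.algebraMap_self,
    RingHom.id_apply, HahnSeries.ofPowerSeries_C, HahnSeries.C_apply, HahnSeries.coeff_single]
  -- the two sides differ only in their `Decidable (m = 0)` instances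
  congr

namespace IsNormalized

variable {f : Ser}

theorem coeff_sub_single (hf : IsNormalized f) (j : ℤ) :
    (f - HahnSeries.single (-1) 1).coeff j = if 0 < j then f.coeff j else 0 := by
  rw [HahnSeries.coeff_sub, HahnSeries.coeff_single]
  by_cases hj : j = -1
  · simp [hj, hf.1]
  · rw [if_neg hj, sub_zero]
    split_ifs with hpos
    · rfl
    · exact hf.2 j (not_lt.1 hpos) hj

theorem coeff_sq (hf : IsNormalized f) (m : ℤ) :
    (f ^ 2).coeff m = (if m = -2 then 1 else 0) + (if 0 ≤ m then 2 * f.coeff (m + 1) else 0)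
      + ∑ j ∈ Icc 1 (m - 1), f.coeff j * f.coeff (m - j) := by
  set h := f - HahnSeries.single (-1) 1
  have hh := hf.coeff_sub_single
  have hsq : f ^ 2 = HahnSeries.single (-2) 1
      + (HahnSeries.single (-1) 1 * h + HahnSeries.single (-1) 1 * h) + h * h := by
    calc f ^ 2 = (HahnSeries.single (-1) 1 + h) ^ 2 := by rw [add_sub_cancel]
      _ = HahnSeries.single (-1) 1 * HahnSeries.single (-1) 1
          + (HahnSeries.single (-1) 1 * h + HahnSeries.single (-1) 1 * h) + h * h := by ring
      _ = _ := by rw [HahnSeries.single_mul_single]; norm_num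
  have hconv : (h * h).coeff m = ∑ j ∈ Icc 1 (m - 1), f.coeff j * f.coeff (m - j) := by
    have hpos : ∀ j < 1, h.coeff j = 0 := fun j hj => by rw [hh, if_neg (by omega)]
    rw [LaurentSeries.coeff_mul_eq_sum_Icc hpos hpos]
    refine sum_congr rfl fun j hj => ?_
    rw [mem_Icc] at hj
    rw [hh, hh, if_pos (by omega), if_pos (by omega)]
  rw [hsq, HahnSeries.coeff_add, HahnSeries.coeff_add, HahnSeries.coeff_add, hconv,
    HahnSeries.coeff_single_mul, hh, HahnSeries.coeff_single, sub_neg_eq_add]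
  split_ifs <;> first | omega | ring1

theorem coeff_sq_of_pos (hf : IsNormalized f) {m : ℤ} (hm : 0 < m) :
    (f ^ 2).coeff m
      = 2 * f.coeff (m + 1) + ∑ j ∈ Icc 1 (m - 1), f.coeff j * f.coeff (m - j) := by
  rw [hf.coeff_sq, if_neg (by omega), if_pos hm.le, zero_add]

theorem isFaber_two (hf : IsNormalized f) :
    IsFaber f 2 (Polynomial.X ^ 2 - Polynomial.C (2 * f.coeff 1)) := by
  have hcoeff (m : ℤ) (hm : m ≤ 0) :
      (Polynomial.aeval f (Polynomial.X ^ 2 - Polynomial.C (2 * f.coeff 1))).coeff m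
        = if m = -2 then 1 else 0 := by
    rw [coeff_aeval_X_sq_sub_C, hf.coeff_sq, Icc_eq_empty_of_lt (by omega), sum_empty]
    split_ifs <;> subst_vars <;> first | omega | simp
  refine ⟨Polynomial.monic_X_pow_sub_C _ two_ne_zero, Polynomial.natDegree_X_pow_sub_C,
    by simpa using hcoeff (-2) (by norm_num), fun m hm hne => ?_⟩
  rw [hcoeff m hm, if_neg (by simpa using hne)]

end IsNormalized

theorem repLHS_two_two_mul (F G : ℕ → Ser) (k : ℤ) :
    RepLHS F G 2 (2 * k) = 2 * (F 1).coeff (4 * k) + (F 2).coeff k + 2 * (G 1).coeff (2 * k) := by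
  have hdiv : Nat.divisorsAntidiagonal 2 = {(1, 2), (2, 1)} := by decide
  simp only [RepLHS, hdiv, sum_pair (by decide : ((1, 2) : ℕ × ℕ) ≠ (2, 1))]
  rw [if_pos (by simp), if_pos (by simp), if_pos ⟨even_two, by simp⟩, if_neg (by simp)]
  have e1 : ((2 : ℕ) : ℤ) * (2 * k) / ((1 : ℕ) : ℤ) = 4 * k := by push_cast; omega
  have e2 : ((1 : ℕ) : ℤ) * (2 * k) / ((2 : ℕ) : ℤ) = k := by push_cast; omega
  have e3 : ((2 : ℕ) : ℤ) * (2 * k) / (2 * ((1 : ℕ) : ℤ)) = 2 * k := by push_cast; omega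
  rw [e1, e2, e3]
  push_cast
  ring

@[simp]
theorem one_indexMul (s : ℕ × Bool) : indexMul (1, false) s = s := by
  simp [indexMul]

/-- If `f = Φ(1) = q⁻¹ + Σ a_k q^k` is completely `(2+)`-replicable, with replicates
`f^{[2]} = Φ(2)` and `f^{[√2]} = Φ(√2)` having coefficients `a_k^{[2]}`, `a_k^{[√2]}`,
then for every `k ≥ 1`:
`a_{4k} = a_{2k+1} + Σ_{j=1}^{k-1} a_j·a_{2k-j} + (1/2)(a_k² − a_k^{[2]}) − a_{2k}^{[√2]}`. -/
theorem coeff_four_k (Φ : ℕ × Bool → Ser) (hsys : IsCR2System Φ)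
    (hnorm : ∀ r : ℕ × Bool, 1 ≤ r.1 → IsNormalized (Φ r)) (k : ℕ) (hk : 1 ≤ k) :
    (Φ (1, false)).coeff (4 * (k : ℤ))
      = (Φ (1, false)).coeff (2 * (k : ℤ) + 1)
        + (∑ j ∈ Finset.Icc 1 (k - 1),
            (Φ (1, false)).coeff (j : ℤ) * (Φ (1, false)).coeff (2 * (k : ℤ) - (j : ℤ)))
        + (1 / 2) * ((Φ (1, false)).coeff (k : ℤ) ^ 2 - (Φ (2, false)).coeff (k : ℤ))
        - (Φ (1, true)).coeff (2 * (k : ℤ)) := by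
  have hf := hnorm (1, false) le_rfl
  have hrep := hsys (1, false) le_rfl 2 one_le_two _ hf.isFaber_two (2 * k)
  rw [repLHS_two_two_mul] at hrep
  simp only [one_indexMul] at hrep
  generalize Φ (1, false) = f at hf hrep ⊢
  rw [coeff_aeval_X_sq_sub_C, if_neg (by omega), sub_zero,
    hf.coeff_sq_of_pos (by omega),
    sum_Icc_two_mul_sub_one_of_symm (fun j => f.coeff j * f.coeff (2 * k - j)) (by omega)
      (fun j => by rw [sub_sub_cancel, mul_comm]), (by ring : 2 * (k : ℤ) - k = k), nsmul_eq_mul,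
    Nat.cast_ofNat] at hrep
  have hcast : ((k - 1 : ℕ) : ℤ) = k - 1 := by omega
  rw [sum_Icc_natCast (fun j => f.coeff j * f.coeff (2 * k - j)), Nat.cast_one, hcast]
  linarith
end
end
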